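/- arXiv:1303.3439 — 2 statements merged into one kernel-verified Lean document; each statement's English description precedes it below -/
import Mathlib

section
/- Let m ≥ 1 be an integer, 0 < p < 1 and 0 < t < 1. Then the equation α^{2m} − t·α^{2m−2} − (1−t)·p^{2m} = 0 has a unique solution α in the open interval (0, 1). -/
lemma mono_aux (k : ℕ) (t c x y : ℝ) (hc : 0 < c) (hx : 0 < x) (hxy : x < y)
    (hex : x ^ k * (x ^ 2 - t) = c) (hey : y ^ k * (y ^ 2 - t) = c) : False := by
  have hxk : (0:ℝ) < x ^ k := pow_pos hx k
  have hyk : (0:ℝ) < y ^ k := pow_pos (hx.trans hxy) k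
  have hxt : 0 < x ^ 2 - t := by
    by_contra h
    push_neg at h
    nlinarith
  have hle : x ^ k ≤ y ^ k := pow_le_pow_left₀ hx.le hxy.le k
  have h1 : x ^ 2 - t < y ^ 2 - t := by nlinarith
  nlinarith [mul_lt_mul_of_pos_left h1 hyk, mul_le_mul_of_nonneg_right hle hxt.le]

theorem stmt4 (m : ℕ) (hm : 1 ≤ m) (p t : ℝ) (hp : 0 < p) (hp1 : p < 1)
    (ht : 0 < t) (ht1 : t < 1) :
    ∃! α : ℝ, α ∈ Set.Ioo (0 : ℝ) 1 ∧
      α ^ (2 * m) - t * α ^ (2 * m - 2) - (1 - t) * p ^ (2 * m) = 0 := by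
  set c : ℝ := (1 - t) * p ^ (2 * m) with hc
  have hc0 : 0 < c := mul_pos (by linarith) (pow_pos hp _)
  set k := 2 * m - 2 with hk
  have hk2 : k + 2 = 2 * m := by omega
  set f : ℝ → ℝ := fun x => x ^ (2 * m) - t * x ^ k - c with hf
  have key : ∀ x : ℝ, f x = x ^ k * (x ^ 2 - t) - c := by
    intro x
    simp only [hf, ← hk2, pow_add]
    ring
  have hcont : ContinuousOn f (Set.Icc 0 1) := by fun_prop
  have hf0 : f 0 < 0 := by
    rw [key]
    have h0 : (0:ℝ) ^ k * ((0:ℝ) ^ 2 - t) ≤ 0 := by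
      apply mul_nonpos_of_nonneg_of_nonpos (pow_nonneg le_rfl k)
      nlinarith
    linarith
  have hf1 : 0 < f 1 := by
    have hplt : p ^ (2 * m) < 1 := pow_lt_one₀ hp.le hp1 (by omega)
    simp only [hf, one_pow]
    nlinarith
  obtain ⟨α, hα, hαf⟩ := intermediate_value_Ioo (by norm_num : (0:ℝ) ≤ 1) hcont
    (Set.mem_Ioo.mpr ⟨hf0, hf1⟩)
  refine ⟨α, ⟨hα, hαf⟩, ?_⟩
  rintro β ⟨hβ, hβf⟩
  have hαe : α ^ k * (α ^ 2 - t) = c := by have := key α; rw [this] at hαf; linarith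
  have hβe : β ^ k * (β ^ 2 - t) = c := by have := key β; simp only [hf] at this; rw [this] at hβf; linarith
  rcases lt_trichotomy β α with h | h | h
  · exact absurd (mono_aux k t c β α hc0 hβ.1 h hβe hαe) not_false
  · exact h
  · exact absurd (mono_aux k t c α β hc0 hα.1 h hαe hβe) not_false
end

section
/- Let m ≥ 1 and E_{2m} = { z ∈ ℂ^n : |z_1|^{2m} + |z_2|^2 + ⋯ + |z_n|^2 < 1 }. For any θ ∈ ℝ and any p = (p_1, …, p_n) ∈ E_{2m}, writing p = (p_1, p̂) with p̂ ∈ ℂ^{n−1} and choosing Ψ an automorphism of the unit ball 𝔹^{n−1} with Ψ(p̂) = 0, the map (z_1, ẑ) ↦ ( e^{iθ} (1 − |p̂|^2)^{1/2m} (1 − ⟨ẑ, p̂⟩)^{−1/m} z_1 , Ψ(ẑ) ) maps E_{2m} bijectively onto E_{2m}. -/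
open scoped InnerProductSpace

/-- The egg domain `E_{2m} ⊂ ℂ × ℂ^{n-1}`, written as a pair
`(z₁, ẑ)` with `ẑ = (z₂, …, z_n)`. -/
def eggDomain (m k : ℕ) : Set (ℂ × EuclideanSpace ℂ (Fin k)) :=
  {z | ‖z.1‖ ^ (2 * m) + ‖z.2‖ ^ 2 < 1}

/-!
Write `q = p̂` and `Ψ = mobius q`. The Möbius map satisfies
`1 - ‖Ψ v‖² = (1 - ‖q‖²)(1 - ‖v‖²) / |1 - ⟪q, v⟫|²`, while the first-coordinate factor `c v` has
`|c v|^{2m} = (1 - ‖q‖²) / |1 - ⟪q, v⟫|²`. So over each `v` in the ball the map multiplies both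
sides of the defining inequality `|z₁|^{2m} < 1 - ‖v‖²` of the egg by the same positive number,
and it preserves the egg and its complement. Bijectivity then comes from that of `Ψ` on the ball
(`v ↦ -Ψ (-v)` is its inverse) and from `c v ≠ 0`.
-/

open Complex Set

/-- `-φ_q`, where `φ_q` is the involutive automorphism of the unit ball exchanging `q` and `0`.
For `q = 0` the divisions by `‖q‖²` are `0 / 0 = 0` and it is the identity. -/
noncomputable def mobius {E : Type*} [NormedAddCommGroup E] [InnerProductSpace ℂ E]
    (q z : E) : E :=
  (1 - ⟪q, z⟫_ℂ)⁻¹ •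
    (((Real.sqrt (1 - ‖q‖ ^ 2) : ℝ) : ℂ) •
        (z - ((⟪q, z⟫_ℂ) / ((‖q‖ ^ 2 : ℝ) : ℂ)) • q)
      - (1 - (⟪q, z⟫_ℂ) / ((‖q‖ ^ 2 : ℝ) : ℂ)) • q)

section Mobius

variable {E : Type*} [NormedAddCommGroup E] [InnerProductSpace ℂ E] {q : E}

lemma inner_self_eq_ofReal_norm_sq (q : E) : ⟪q, q⟫_ℂ = ((‖q‖ ^ 2 : ℝ) : ℂ) := by
  simp [inner_self_eq_norm_sq_to_K]

@[simp]
lemma mobius_zero (z : E) : mobius 0 z = z := by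
  simp [mobius]

lemma inner_mobius (z : E) :
    ⟪q, mobius q z⟫_ℂ = (1 - ⟪q, z⟫_ℂ)⁻¹ * (⟪q, z⟫_ℂ - ((‖q‖ ^ 2 : ℝ) : ℂ)) := by
  rcases eq_or_ne q 0 with rfl | hq
  · simp
  have : ((‖q‖ ^ 2 : ℝ) : ℂ) ≠ 0 := by simpa using hq
  simp only [mobius, inner_smul_right, inner_sub_right, inner_self_eq_ofReal_norm_sq]
  field_simp
  ring

lemma mobius_neg_mobius (hq : ‖q‖ < 1) {z : E} (hz : 1 - ⟪q, z⟫_ℂ ≠ 0) :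
    mobius q (-mobius q z) = -z := by
  rcases eq_or_ne q 0 with rfl | hq0
  · simp
  set a := ⟪q, z⟫_ℂ with ha
  set r : ℂ := ((‖q‖ ^ 2 : ℝ) : ℂ) with hr
  set s : ℂ := ((Real.sqrt (1 - ‖q‖ ^ 2) : ℝ) : ℂ) with hs
  have hr0 : r ≠ 0 := by simpa [hr] using hq0
  have hr1 : 1 - r ≠ 0 := by
    rw [hr, ← ofReal_one, ← ofReal_sub, ofReal_ne_zero]
    nlinarith [norm_nonneg q]
  have hs2 : s * s = 1 - r := by
    rw [hs, hr, ← ofReal_mul, Real.mul_self_sqrt (by nlinarith [norm_nonneg q])]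
    push_cast; ring
  have hinner : ⟪q, -mobius q z⟫_ℂ = (1 - a)⁻¹ * (r - a) := by
    rw [inner_neg_right, inner_mobius]; ring
  have hden : 1 - ⟪q, -mobius q z⟫_ℂ = (1 - a)⁻¹ * (1 - r) := by
    rw [hinner]; field_simp; ring
  rw [mobius, hden, hinner, mobius]
  simp only [← ha, ← hr, ← hs]
  match_scalars
  · field_simp
    linear_combination (-1) * hs2
  · field_simp
    linear_combination a * hs2

lemma one_sub_norm_mobius_sq (hq : ‖q‖ < 1) {z : E} (hz : 1 - ⟪q, z⟫_ℂ ≠ 0) :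
    1 - ‖mobius q z‖ ^ 2 = (1 - ‖q‖ ^ 2) * (1 - ‖z‖ ^ 2) / normSq (1 - ⟪q, z⟫_ℂ) := by
  rcases eq_or_ne q 0 with rfl | hq0
  · simp
  set a := ⟪q, z⟫_ℂ with ha
  set r : ℂ := ((‖q‖ ^ 2 : ℝ) : ℂ) with hr
  have hr0 : r ≠ 0 := by simpa [hr] using hq0
  -- Both `z` and `mobius q z` are combinations of `q` and the orthogonal vector `Q`.
  set Q := z - (a / r) • q with hQ
  have hQq : ⟪Q, q⟫_ℂ = 0 := by
    rw [← inner_conj_symm, hQ, inner_sub_right, inner_smul_right, inner_self_eq_ofReal_norm_sq,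
      ← ha, div_mul_cancel₀ _ hr0, sub_self, map_zero]
  have hz2 : ‖z‖ ^ 2 = ‖Q‖ ^ 2 + normSq (a / r) * ‖q‖ ^ 2 := by
    rw [show z = Q + (a / r) • q by rw [hQ, sub_add_cancel], norm_add_sq (𝕜 := ℂ),
      inner_smul_right, hQq, norm_smul, mul_pow, Complex.sq_norm]
    simp
  have hm2 : ‖mobius q z‖ ^ 2 =
      (normSq (1 - a))⁻¹ * ((1 - ‖q‖ ^ 2) * ‖Q‖ ^ 2 + normSq (1 - a / r) * ‖q‖ ^ 2) := by
    rw [show mobius q z = (1 - a)⁻¹ • (((Real.sqrt (1 - ‖q‖ ^ 2) : ℝ) : ℂ) • Q - (1 - a / r) • q)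
      from rfl, norm_smul, mul_pow, norm_sub_sq (𝕜 := ℂ), inner_smul_left, inner_smul_right, hQq,
      norm_smul, norm_smul, mul_pow, mul_pow, Complex.sq_norm, Complex.sq_norm, Complex.sq_norm]
    simp [Real.mul_self_sqrt (by nlinarith [norm_nonneg q] : 0 ≤ 1 - ‖q‖ ^ 2)]
  have hN : normSq (1 - a) ≠ 0 := by simpa using hz
  rw [hm2, hz2, eq_div_iff hN, show 1 - a / r = (r - a) / r by field_simp, map_div₀, map_div₀,
    hr, normSq_ofReal]
  field_simp
  simp only [normSq_apply, sub_re, sub_im, one_re, one_im, ofReal_re, ofReal_im]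
  ring

lemma one_sub_inner_ne_zero (hq : ‖q‖ < 1) {z : E} (hz : ‖z‖ < 1) : 1 - ⟪q, z⟫_ℂ ≠ 0 := by
  rw [sub_ne_zero]
  intro h
  have := norm_inner_le_norm (𝕜 := ℂ) q z
  rw [← h, norm_one] at this
  nlinarith [norm_nonneg q, norm_nonneg z]

lemma div_normSq_one_sub_inner_pos (hq : ‖q‖ < 1) {z : E} (hz : ‖z‖ < 1) :
    0 < (1 - ‖q‖ ^ 2) / normSq (1 - ⟪q, z⟫_ℂ) := by
  have : 0 < 1 - ‖q‖ ^ 2 := by nlinarith [norm_nonneg q]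
  have : 0 < normSq (1 - ⟪q, z⟫_ℂ) := normSq_pos.2 (one_sub_inner_ne_zero hq hz)
  positivity

lemma mapsTo_mobius_ball (hq : ‖q‖ < 1) :
    MapsTo (mobius q) (Metric.ball 0 1) (Metric.ball 0 1) := by
  intro z hz
  rw [mem_ball_zero_iff] at hz ⊢
  have : 0 < 1 - ‖mobius q z‖ ^ 2 := by
    rw [one_sub_norm_mobius_sq hq (one_sub_inner_ne_zero hq hz), mul_div_right_comm]
    have : 0 < 1 - ‖z‖ ^ 2 := by nlinarith [norm_nonneg z]
    have := div_normSq_one_sub_inner_pos hq hz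
    positivity
  nlinarith [norm_nonneg (mobius q z)]

lemma bijOn_mobius_ball (hq : ‖q‖ < 1) :
    BijOn (mobius q) (Metric.ball 0 1) (Metric.ball 0 1) := by
  have hd : ∀ z ∈ Metric.ball (0 : E) 1, 1 - ⟪q, z⟫_ℂ ≠ 0 := fun z hz =>
    one_sub_inner_ne_zero hq (mem_ball_zero_iff.1 hz)
  have hneg : ∀ z ∈ Metric.ball (0 : E) 1, -z ∈ Metric.ball (0 : E) 1 := fun z hz => by
    simpa using hz
  refine InvOn.bijOn (f' := fun w => -mobius q (-w)) ⟨fun z hz => ?_, fun w hw => ?_⟩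
    (mapsTo_mobius_ball hq) fun w hw => hneg _ (mapsTo_mobius_ball hq (hneg w hw))
  · simp only [mobius_neg_mobius hq (hd z hz), neg_neg]
  · simp only [mobius_neg_mobius hq (hd _ (hneg w hw)), neg_neg]

end Mobius

lemma bijOn_skew_mul {K α : Type*} [GroupWithZero K] {S : Set (K × α)} {B : Set α}
    {c : α → K} {g : α → α} (hSB : ∀ z ∈ S, z.2 ∈ B) (hg : BijOn g B B)
    (hc : ∀ v ∈ B, c v ≠ 0) (hS : ∀ z : K × α, z.2 ∈ B → ((c z.2 * z.1, g z.2) ∈ S ↔ z ∈ S)) :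
    BijOn (fun z => (c z.2 * z.1, g z.2)) S S := by
  refine ⟨fun z hz => (hS z (hSB z hz)).2 hz, fun z hz z' hz' h => ?_, fun w hw => ?_⟩
  · obtain ⟨h₁, h₂⟩ := Prod.ext_iff.1 h
    have h₂ : z.2 = z'.2 := hg.injOn (hSB z hz) (hSB z' hz') h₂
    simp only [h₂] at h₁
    exact Prod.ext (mul_left_cancel₀ (hc _ (hSB z' hz')) h₁) h₂
  · obtain ⟨v, hv, hgv⟩ := hg.surjOn (hSB w hw)
    have hw' : (c v * ((c v)⁻¹ * w.1), g v) = w := by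
      rw [mul_inv_cancel_left₀ (hc v hv), hgv]
    exact ⟨((c v)⁻¹ * w.1, v), (hS _ hv).1 (hw'.symm ▸ hw), hw'⟩

lemma norm_exp_mul_rpow_mul_cpow_pow {m : ℕ} (hm : m ≠ 0) (θ : ℝ) {t : ℝ} (ht : 0 ≤ t)
    (w : ℂ) :
    ‖exp (θ * I) * ((t ^ ((1 : ℝ) / (2 * m)) : ℝ) : ℂ) * w ^ (-(1 / (m : ℂ)))‖ ^ (2 * m) =
      t / normSq w := by
  have hexp : -(1 / (m : ℂ)) = ((-(2 : ℝ) * ((2 * m : ℕ) : ℝ)⁻¹ : ℝ) : ℂ) := by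
    push_cast; field_simp
  have ht' : (t ^ ((1 : ℝ) / (2 * m))) ^ (2 * m) = t := by
    rw [one_div, ← Nat.cast_ofNat, ← Nat.cast_mul, Real.rpow_inv_natCast_pow ht (by positivity)]
  rw [norm_mul, norm_mul, norm_exp_ofReal_mul_I, one_mul, norm_real, Real.norm_eq_abs,
    abs_of_nonneg (by positivity), hexp, norm_cpow_real, mul_pow, ht', Real.rpow_mul (norm_nonneg _),
    Real.rpow_inv_natCast_pow (by positivity) (by positivity), Real.rpow_neg (norm_nonneg _),
    Real.rpow_two, Complex.sq_norm, div_eq_mul_inv]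

lemma norm_snd_lt_one_of_mem_eggDomain {m k : ℕ} {z : ℂ × EuclideanSpace ℂ (Fin k)}
    (hz : z ∈ eggDomain m k) : ‖z.2‖ < 1 := by
  have : ‖z.2‖ ^ 2 < 1 := by
    have := pow_nonneg (norm_nonneg z.1) (2 * m)
    rw [eggDomain, Set.mem_ofPred_eq] at hz
    linarith
  nlinarith [norm_nonneg z.2]

lemma mul_mobius_mem_eggDomain_iff {m k : ℕ} {q v : EuclideanSpace ℂ (Fin k)} (hq : ‖q‖ < 1)
    (hv : ‖v‖ < 1) {c : ℂ} (hc : ‖c‖ ^ (2 * m) = (1 - ‖q‖ ^ 2) / normSq (1 - ⟪q, v⟫_ℂ))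
    (z₁ : ℂ) : (c * z₁, mobius q v) ∈ eggDomain m k ↔ (z₁, v) ∈ eggDomain m k := by
  have key : 1 - ‖mobius q v‖ ^ 2 = (1 - ‖q‖ ^ 2) / normSq (1 - ⟪q, v⟫_ℂ) * (1 - ‖v‖ ^ 2) := by
    rw [one_sub_norm_mobius_sq hq (one_sub_inner_ne_zero hq hv)]; ring
  simp only [eggDomain, Set.mem_ofPred_eq, norm_mul, mul_pow, hc]
  rw [← sub_lt_sub_iff_right (‖mobius q v‖ ^ 2), add_sub_cancel_right, key,
    mul_lt_mul_iff_right₀ (div_normSq_one_sub_inner_pos hq hv), lt_sub_iff_add_lt]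

theorem stmt8_general (m k : ℕ) (hm : 1 ≤ m) (θ : ℝ)
    (p : ℂ × EuclideanSpace ℂ (Fin k)) (hp : p ∈ eggDomain m k)
    (Ψ : EuclideanSpace ℂ (Fin k) → EuclideanSpace ℂ (Fin k))
    (hΨ : ∀ z : EuclideanSpace ℂ (Fin k),
      Ψ z = (1 - ⟪p.2, z⟫_ℂ)⁻¹ •
        (((Real.sqrt (1 - ‖p.2‖ ^ 2) : ℝ) : ℂ) •
            (z - ((⟪p.2, z⟫_ℂ) / ((‖p.2‖ ^ 2 : ℝ) : ℂ)) • p.2)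
          - (1 - (⟪p.2, z⟫_ℂ) / ((‖p.2‖ ^ 2 : ℝ) : ℂ)) • p.2)) :
    Set.BijOn
      (fun z : ℂ × EuclideanSpace ℂ (Fin k) =>
        (Complex.exp (θ * Complex.I) *
            (((1 - ‖p.2‖ ^ 2) ^ ((1 : ℝ) / (2 * m)) : ℝ) : ℂ) *
            ((1 - ⟪p.2, z.2⟫_ℂ) ^ (-(1 / (m : ℂ)))) * z.1,
          Ψ z.2))
      (eggDomain m k) (eggDomain m k) := by
  obtain rfl : Ψ = mobius p.2 := funext hΨ
  have hq : ‖p.2‖ < 1 := norm_snd_lt_one_of_mem_eggDomain hp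
  have hc (v : EuclideanSpace ℂ (Fin k)) := norm_exp_mul_rpow_mul_cpow_pow (m := m) (by omega) θ
    (by nlinarith [norm_nonneg p.2] : 0 ≤ 1 - ‖p.2‖ ^ 2) (1 - ⟪p.2, v⟫_ℂ)
  refine bijOn_skew_mul (B := Metric.ball 0 1)
    (c := fun v => exp (θ * I) * (((1 - ‖p.2‖ ^ 2) ^ ((1 : ℝ) / (2 * m)) : ℝ) : ℂ) *
      (1 - ⟪p.2, v⟫_ℂ) ^ (-(1 / (m : ℂ))))
    (fun z hz => mem_ball_zero_iff.2 (norm_snd_lt_one_of_mem_eggDomain hz))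
    (bijOn_mobius_ball hq) (fun v hv => ?_)
    (fun z hz => mul_mobius_mem_eggDomain_iff hq (mem_ball_zero_iff.1 hz) (hc z.2) z.1)
  refine norm_ne_zero_iff.1 fun h0 => ?_
  have := div_normSq_one_sub_inner_pos hq (mem_ball_zero_iff.1 hv)
  rw [← hc v, h0, zero_pow (by omega)] at this
  exact this.false

theorem stmt8 (m k : ℕ) (hm : 1 ≤ m) (θ : ℝ)
    (p : ℂ × EuclideanSpace ℂ (Fin k)) (hp : p ∈ eggDomain m k) (hp2 : p.2 ≠ 0)
    (Ψ : EuclideanSpace ℂ (Fin k) → EuclideanSpace ℂ (Fin k))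
    (hΨ : ∀ z : EuclideanSpace ℂ (Fin k),
      Ψ z = (1 - ⟪p.2, z⟫_ℂ)⁻¹ •
        (((Real.sqrt (1 - ‖p.2‖ ^ 2) : ℝ) : ℂ) •
            (z - ((⟪p.2, z⟫_ℂ) / ((‖p.2‖ ^ 2 : ℝ) : ℂ)) • p.2)
          - (1 - (⟪p.2, z⟫_ℂ) / ((‖p.2‖ ^ 2 : ℝ) : ℂ)) • p.2)) :
    Set.BijOn
      (fun z : ℂ × EuclideanSpace ℂ (Fin k) =>
        (Complex.exp (θ * Complex.I) *
            (((1 - ‖p.2‖ ^ 2) ^ ((1 : ℝ) / (2 * m)) : ℝ) : ℂ) *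
            ((1 - ⟪p.2, z.2⟫_ℂ) ^ (-(1 / (m : ℂ)))) * z.1,
          Ψ z.2))
      (eggDomain m k) (eggDomain m k) :=
  stmt8_general m k hm θ p hp Ψ hΨ
end
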